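/- arXiv:2605.28484 — 3 statements merged into one kernel-verified Lean document; each statement's English description precedes it below -/
import Mathlib

section
/- CoKleisli composition over the list Zipper comonad is associative: for all coKleisli arrows f : Zipper α → β, g : Zipper β → γ, h : Zipper γ → δ, (f >=> g) >=> h = f >=> (g >=> h) as functions Zipper α → δ. -/
/-- A list zipper: a focused element with left context (stored reversed,
nearest neighbor first) and right context. -/
structure Zipper (α : Type*) where
  left : List α
  focus : α
  right : List α

namespace Zipper

variable {α β γ δ : Type*}

/-- Extract the focused element. -/
def extract (z : Zipper α) : α := z.focus

/-- Move the focus one step to the left (identity if the left context is empty). -/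
def moveLeft : Zipper α → Zipper α
  | ⟨a :: l, c, r⟩ => ⟨l, a, c :: r⟩
  | z => z

/-- Move the focus one step to the right (identity if the right context is empty). -/
def moveRight : Zipper α → Zipper α
  | ⟨l, c, b :: r⟩ => ⟨c :: l, b, r⟩
  | z => z

/-- Auxiliary: successive left shifts, structurally on the left context. -/
def leftsAux : List α → α → List α → List (Zipper α)
  | [], _, _ => []
  | a :: l, c, r => ⟨l, a, c :: r⟩ :: leftsAux l a (c :: r)

/-- The list [moveLeft z, moveLeft (moveLeft z), …] of successive left shifts. -/
def lefts (z : Zipper α) : List (Zipper α) := leftsAux z.left z.focus z.right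

/-- Auxiliary: successive right shifts, structurally on the right context. -/
def rightsAux : List α → α → List α → List (Zipper α)
  | _, _, [] => []
  | l, c, b :: r => ⟨c :: l, b, r⟩ :: rightsAux (c :: l) b r

/-- The list [moveRight z, moveRight (moveRight z), …] of successive right shifts. -/
def rights (z : Zipper α) : List (Zipper α) := rightsAux z.left z.focus z.right

/-- CoKleisli extension: apply the local rule `f` at every position. -/
def extend (f : Zipper α → β) (z : Zipper α) : Zipper β :=
  ⟨(lefts z).map f, f z, (rights z).map f⟩

/-- The underlying list of a zipper. -/
def toList (z : Zipper α) : List α := z.left.reverse ++ [z.focus] ++ z.right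

/-- The zipper refocused at position `i` (intended for `i < (toList z).length`). -/
def focusAt (z : Zipper α) (i : ℕ) : Zipper α :=
  ⟨((toList z).take i).reverse, (toList z).getD i z.focus, (toList z).drop (i + 1)⟩

end Zipper

/-- CoKleisli composition over the list Zipper comonad. -/
def cokComp {α β γ : Type*} (f : Zipper α → β) (g : Zipper β → γ) : Zipper α → γ :=
  fun z => g (Zipper.extend f z)

namespace Zipper

lemma leftsAux_extend {α β : Type*} (f : Zipper α → β) :
    ∀ (l : List α) (c : α) (r : List α),
      leftsAux ((leftsAux l c r).map f) (f ⟨l, c, r⟩) ((rightsAux l c r).map f)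
        = (leftsAux l c r).map (extend f)
  | [], _, _ => rfl
  | a :: l, c, r => by
    simp only [leftsAux, List.map_cons]
    have h1 : f ⟨a :: l, c, r⟩ :: (rightsAux (a :: l) c r).map f
        = (rightsAux l a (c :: r)).map f := by
      simp [rightsAux]
    rw [h1, leftsAux_extend f l a (c :: r)]
    rfl

lemma rightsAux_extend {α β : Type*} (f : Zipper α → β) :
    ∀ (r : List α) (c : α) (l : List α),
      rightsAux ((leftsAux l c r).map f) (f ⟨l, c, r⟩) ((rightsAux l c r).map f)
        = (rightsAux l c r).map (extend f)
  | [], _, _ => rfl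
  | b :: r, c, l => by
    simp only [rightsAux, List.map_cons]
    have h1 : f ⟨l, c, b :: r⟩ :: (leftsAux l c (b :: r)).map f
        = (leftsAux (c :: l) b r).map f := by
      simp [leftsAux]
    rw [h1, rightsAux_extend f r b (c :: l)]
    rfl

lemma lefts_extend {α β : Type*} (f : Zipper α → β) (z : Zipper α) :
    lefts (extend f z) = (lefts z).map (extend f) :=
  leftsAux_extend f z.left z.focus z.right

lemma rights_extend {α β : Type*} (f : Zipper α → β) (z : Zipper α) :
    rights (extend f z) = (rights z).map (extend f) :=
  rightsAux_extend f z.right z.focus z.left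

lemma extend_extend {α β γ : Type*} (f : Zipper α → β) (g : Zipper β → γ) (z : Zipper α) :
    extend (cokComp f g) z = extend g (extend f z) := by
  rw [show extend g (extend f z)
      = ⟨(lefts (extend f z)).map g, g (extend f z), (rights (extend f z)).map g⟩ from rfl,
    lefts_extend, rights_extend, List.map_map, List.map_map]
  rfl

end Zipper

/-- CoKleisli composition is associative. -/
theorem cokComp_assoc {α β γ δ : Type*} (f : Zipper α → β) (g : Zipper β → γ)
    (h : Zipper γ → δ) :
    cokComp (cokComp f g) h = cokComp f (cokComp g h) := by
  funext z
  exact congrArg h (Zipper.extend_extend f g z)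
end

section
/- Writer comonad law L1': for every type α and every pair (w, z) : Set ℕ × Zipper α, extendW extractW (w, z) = (w, z), where extractW (w, z) = (∅, extract z); that is, extending by the (deletion-free) extraction arrow is the identity on the Writer comonad carrier. -/
open Zipper in
/-- Writer comonad counit: empty deletion set paired with the zipper focus. -/
def extractW {α : Type*} (p : Set ℕ × Zipper α) : Set ℕ × α :=
  (∅, Zipper.extract p.2)

open Zipper in
/-- Writer comonad extension: accumulate (by union) the deletion sets produced
by `f` at every position, and extend the value component over the zipper. -/
def extendW {α β : Type*} (f : Set ℕ × Zipper α → Set ℕ × β)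
    (p : Set ℕ × Zipper α) : Set ℕ × Zipper β :=
  (p.1 ∪ ⋃ i ∈ Finset.range (Zipper.toList p.2).length, (f (p.1, Zipper.focusAt p.2 i)).1,
   Zipper.extend (fun z' => (f (p.1, z')).2) p.2)

open Zipper

lemma leftsAux_map_extract {α : Type*} (l : List α) (c : α) (r : List α) :
    (Zipper.leftsAux l c r).map Zipper.extract = l := by
  induction l generalizing c r with
  | nil => rfl
  | cons a l ih => simp [Zipper.leftsAux, Zipper.extract, ih]

lemma rightsAux_map_extract {α : Type*} (l : List α) (c : α) (r : List α) :
    (Zipper.rightsAux l c r).map Zipper.extract = r := by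
  induction r generalizing l c with
  | nil => rfl
  | cons b r ih => simp [Zipper.rightsAux, Zipper.extract, ih]

/-- Writer comonad law L1': extending by the deletion-free extraction arrow
is the identity on the Writer comonad carrier. -/
theorem writer_comonad_law1 {α : Type*} (w : Set ℕ) (z : Zipper α) :
    extendW extractW (w, z) = (w, z) := by
  have h1 : (⋃ i ∈ Finset.range (Zipper.toList z).length,
      (extractW ((w, z).1, Zipper.focusAt z i)).1) = (∅ : Set ℕ) := by
    simp [extractW]
  have h2 : Zipper.extend (fun z' => (extractW ((w, z).1, z')).2) z = z := by
    cases z with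
    | mk l c r =>
      simp [Zipper.extend, extractW, Zipper.lefts, Zipper.rights, Zipper.extract,
        show (fun z' : Zipper α => z'.focus) = Zipper.extract from rfl,
        leftsAux_map_extract, rightsAux_map_extract]
  simp only [extendW, h1, h2, Set.union_empty]
end

section
/- CoKleisli composition over the Writer comonad is associative on accumulating arrows: for arrows f : Set ℕ × Zipper α → Set ℕ × β, g : Set ℕ × Zipper β → Set ℕ × γ, h : Set ℕ × Zipper γ → Set ℕ × δ such that g and h are accumulating (w' ⊆ (g (w', z')).1 and w' ⊆ (h (w', z')).1 for all inputs), the coKleisli composites satisfy (f >=>W g) >=>W h = f >=>W (g >=>W h), where (f >=>W g)(w, z) = g (extendW f (w, z)). -/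
/-- CoKleisli composition over the Writer comonad. -/
def cokCompW {α β γ : Type*} (f : Set ℕ × Zipper α → Set ℕ × β)
    (g : Set ℕ × Zipper β → Set ℕ × γ) : Set ℕ × Zipper α → Set ℕ × γ :=
  fun p => g (extendW f p)


/-!
`extendW` commutes with refocusing: its deletion set is a union over all positions, hence the
same at every focus, and its value part is `Zipper.extend`, which commutes with refocusing. So the
value parts of `extendW (f >=>W g) (w, z)` and `extendW g (extendW f (w, z))` agree by the
comonad law for `Zipper.extend`, while their deletion sets are `w ∪ S` and `(w ∪ F) ∪ S`, where
`w ∪ F` is the deletion set of `extendW f (w, z)` and `S` the union of the deletion sets of `g`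
at all positions. As `g` is accumulating, `w ∪ F ⊆ S`, so both are `S`. Applying `h` to the
two sides gives associativity.
-/

namespace Zipper

variable {α β γ : Type*}

theorem length_toList (z : Zipper α) :
    (toList z).length = z.left.length + 1 + z.right.length := by
  simp [toList]
  omega

theorem focusAt_congr {z z' : Zipper α} (h : toList z = toList z') {i : ℕ}
    (hi : i < (toList z).length) : focusAt z i = focusAt z' i := by
  simp only [focusAt, h, List.getD_eq_getElem _ _ (h ▸ hi)]

theorem focusAt_mk_length (l : List α) (c : α) (r : List α) :
    focusAt ⟨l, c, r⟩ l.length = ⟨l, c, r⟩ := by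
  simp [focusAt, toList, List.drop_append]

theorem toList_focusAt {z : Zipper α} {i : ℕ} (hi : i < (toList z).length) :
    toList (focusAt z i) = toList z := by
  change ((toList z).take i).reverse.reverse ++ [(toList z).getD i z.focus]
    ++ (toList z).drop (i + 1) = toList z
  rw [List.reverse_reverse, List.getD_eq_getElem _ _ hi, List.append_assoc, List.singleton_append,
    List.getElem_cons_drop, List.take_append_drop]

theorem length_left_focusAt {z : Zipper α} {i : ℕ} (hi : i < (toList z).length) :
    (focusAt z i).left.length = i := by
  simp [focusAt]
  omega

theorem ext_toList {z z' : Zipper α} (hl : z.left.length = z'.left.length)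
    (ht : toList z = toList z') : z = z' := by
  obtain ⟨l, c, r⟩ := z
  obtain ⟨l', c', r'⟩ := z'
  simp only [toList, List.append_assoc, List.singleton_append] at ht hl
  obtain ⟨hrev, hrest⟩ := List.append_inj ht (by simpa using hl)
  obtain ⟨rfl, rfl⟩ := List.cons_eq_cons.mp hrest
  rw [List.reverse_inj.mp hrev]

theorem reverse_leftsAux (l : List α) (c : α) (r : List α) :
    (leftsAux l c r).reverse = (List.range l.length).map (focusAt ⟨l, c, r⟩) := by
  induction l generalizing c r with
  | nil => rfl
  | cons a l ih =>
    have hL : toList ⟨l, a, c :: r⟩ = toList ⟨a :: l, c, r⟩ := by simp [toList]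
    have hlen : ∀ j < l.length + 1, j < (toList ⟨l, a, c :: r⟩).length := by
      intro j hj
      rw [length_toList]
      simp only [List.length_cons]
      omega
    rw [leftsAux, List.reverse_cons, ih, List.length_cons, List.range_succ, List.map_append,
      List.map_singleton, ← focusAt_congr hL (hlen _ (by omega)), focusAt_mk_length]
    congr 1
    refine List.map_congr_left fun j hj => focusAt_congr hL (hlen _ ?_)
    simp only [List.mem_range] at hj
    omega

theorem rightsAux_eq (l : List α) (c : α) (r : List α) :
    rightsAux l c r =
      (List.range r.length).map (fun j => focusAt ⟨l, c, r⟩ (l.length + 1 + j)) := by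
  induction r generalizing l c with
  | nil => rfl
  | cons b r ih =>
    have hR : toList ⟨c :: l, b, r⟩ = toList ⟨l, c, b :: r⟩ := by simp [toList]
    have hlen : ∀ j < r.length + 1, l.length + 1 + j < (toList ⟨c :: l, b, r⟩).length := by
      intro j hj
      rw [length_toList]
      simp only [List.length_cons]
      omega
    rw [rightsAux, ih, List.length_cons, List.length_cons, List.range_succ_eq_map, List.map_cons,
      List.map_map, Nat.add_zero, ← focusAt_congr hR (hlen 0 (by omega))]
    refine congrArg₂ _ (focusAt_mk_length (c :: l) b r).symm (List.map_congr_left fun j hj => ?_)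
    simp only [List.mem_range] at hj
    rw [Function.comp_apply, ← focusAt_congr hR (hlen _ (by omega))]
    congr 1
    omega

theorem toList_extend (k : Zipper α → β) (z : Zipper α) :
    toList (extend k z) = (List.range (toList z).length).map (fun i => k (focusAt z i)) := by
  obtain ⟨l, c, r⟩ := z
  rw [length_toList, List.range_add, List.range_succ]
  simp only [toList, extend, lefts, rights, ← List.map_reverse, reverse_leftsAux, rightsAux_eq,
    List.map_append, List.map_map, List.map_singleton, focusAt_mk_length]
  rfl

theorem length_left_extend (k : Zipper α → β) (z : Zipper α) :
    (extend k z).left.length = z.left.length := by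
  obtain ⟨l, c, r⟩ := z
  simp only [extend, lefts, List.length_map]
  rw [← List.length_reverse, reverse_leftsAux, List.length_map, List.length_range]

theorem length_toList_extend (k : Zipper α → β) (z : Zipper α) :
    (toList (extend k z)).length = (toList z).length := by
  simp [toList_extend]

theorem focusAt_extend (k : Zipper α → β) {z : Zipper α} {i : ℕ}
    (hi : i < (toList z).length) : focusAt (extend k z) i = extend k (focusAt z i) := by
  have hi' : i < (toList (extend k z)).length := by rwa [length_toList_extend]
  apply ext_toList
  · rw [length_left_focusAt hi', length_left_extend, length_left_focusAt hi]
  · rw [toList_focusAt hi', toList_extend, toList_extend, toList_focusAt hi]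
    refine List.map_congr_left fun j hj => ?_
    rw [focusAt_congr (toList_focusAt hi) (by simpa [toList_focusAt hi] using hj)]

theorem extend_congr {k k' : Zipper α → β} {z : Zipper α}
    (h : ∀ i < (toList z).length, k (focusAt z i) = k' (focusAt z i)) :
    extend k z = extend k' z := by
  refine ext_toList (by rw [length_left_extend, length_left_extend]) ?_
  rw [toList_extend, toList_extend]
  exact List.map_congr_left fun i hi => h i (List.mem_range.mp hi)

theorem extend_extend_s14 (k : Zipper α → β) (k' : Zipper β → γ) (z : Zipper α) :
    extend k' (extend k z) = extend (fun z' => k' (extend k z')) z := by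
  refine ext_toList (by rw [length_left_extend, length_left_extend, length_left_extend]) ?_
  rw [toList_extend k', length_toList_extend, toList_extend]
  exact List.map_congr_left fun i hi => by rw [focusAt_extend k (List.mem_range.mp hi)]

end Zipper

open Zipper

theorem fst_extendW_focusAt {α β : Type*} (f : Set ℕ × Zipper α → Set ℕ × β) (w : Set ℕ)
    {z : Zipper α} {i : ℕ} (hi : i < (toList z).length) :
    (extendW f (w, focusAt z i)).1 = (extendW f (w, z)).1 := by
  simp only [extendW, toList_focusAt hi]
  refine congrArg (w ∪ ·) (Set.iUnion₂_congr fun j hj => ?_)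
  rw [focusAt_congr (toList_focusAt hi) (by simpa [toList_focusAt hi] using hj)]

theorem extendW_cokCompW {α β γ : Type*}
    (f : Set ℕ × Zipper α → Set ℕ × β) (g : Set ℕ × Zipper β → Set ℕ × γ)
    (hg : ∀ (w' : Set ℕ) (z' : Zipper β), w' ⊆ (g (w', z')).1) (p : Set ℕ × Zipper α) :
    extendW (cokCompW f g) p = extendW g (extendW f p) := by
  obtain ⟨w, z⟩ := p
  set fw : Zipper α → β := fun y => (f (w, y)).2
  set W := (extendW f (w, z)).1
  have hlocal : ∀ i < (toList z).length,
      extendW f (w, focusAt z i) = (W, focusAt (extend fw z) i) := fun i hi =>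
    Prod.ext (fst_extendW_focusAt f w hi) (focusAt_extend fw hi).symm
  refine Prod.ext ?_ ?_
  · change w ∪ ⋃ i ∈ Finset.range (toList z).length, (g (extendW f (w, focusAt z i))).1
      = W ∪ ⋃ i ∈ Finset.range (toList (extend fw z)).length, (g (W, focusAt (extend fw z) i)).1
    rw [length_toList_extend, Set.iUnion₂_congr fun i hi => by
      rw [hlocal i (Finset.mem_range.mp hi)]]
    -- `g` is accumulating and a zipper has at least one position.
    have hWS : W ⊆ ⋃ i ∈ Finset.range (toList z).length, (g (W, focusAt (extend fw z) i)).1 :=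
      Set.subset_iUnion₂_of_subset 0 (Finset.mem_range.mpr (by rw [length_toList]; omega)) (hg W _)
    rw [Set.union_eq_self_of_subset_left (Set.subset_union_left.trans hWS),
      Set.union_eq_self_of_subset_left hWS]
  · change extend (fun z' => (g (extendW f (w, z'))).2) z
      = extend (fun y => (g (W, y)).2) (extend fw z)
    rw [extend_extend_s14]
    exact extend_congr fun i hi => by rw [hlocal i hi, focusAt_extend fw hi]

theorem cokCompW_assoc_general {α β γ δ : Type*}
    (f : Set ℕ × Zipper α → Set ℕ × β) (g : Set ℕ × Zipper β → Set ℕ × γ)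
    (h : Set ℕ × Zipper γ → Set ℕ × δ)
    (hg : ∀ (w' : Set ℕ) (z' : Zipper β), w' ⊆ (g (w', z')).1) :
    cokCompW (cokCompW f g) h = cokCompW f (cokCompW g h) :=
  funext fun p => congrArg h (extendW_cokCompW f g hg p)

/-- CoKleisli composition over the Writer comonad is associative on
accumulating arrows. -/
theorem cokCompW_assoc {α β γ δ : Type*}
    (f : Set ℕ × Zipper α → Set ℕ × β) (g : Set ℕ × Zipper β → Set ℕ × γ)
    (h : Set ℕ × Zipper γ → Set ℕ × δ)
    (hg : ∀ (w' : Set ℕ) (z' : Zipper β), w' ⊆ (g (w', z')).1)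
    (hh : ∀ (w' : Set ℕ) (z' : Zipper γ), w' ⊆ (h (w', z')).1) :
    cokCompW (cokCompW f g) h = cokCompW f (cokCompW g h) :=
  cokCompW_assoc_general f g h hg
end
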